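/- arXiv:1306.4390 — 2 statements merged into one kernel-verified Lean document; each statement's English description precedes it below -/
import Mathlib

section
/- Let ν : ℕ → ℤ and m_k = k + ⌈max(0, log|ν(k)|)⌉. If z ∈ ℂ and k ≥ e·|z|, then (|z|/k)^{m_k} · |ν(k)|/k ≤ 1/(k·e^k). -/
/-- `m_k^ν = k + ⌈max(0, log |ν(k)|)⌉`. -/
noncomputable def mExp (ν : ℕ → ℤ) (k : ℕ) : ℕ :=
  k + ⌈max 0 (Real.log |(ν k : ℝ)|)⌉₊

theorem term_bound (ν : ℕ → ℤ) (z : ℂ) (k : ℕ) (hk : 1 ≤ k)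
    (hke : Real.exp 1 * ‖z‖ ≤ k) :
    (‖z‖ / k) ^ (mExp ν k) * |(ν k : ℝ)| / k ≤ 1 / (k * Real.exp k) := by
  have hk0 : (0:ℝ) < k := by exact_mod_cast Nat.pos_of_ne_zero (by omega)
  rcases eq_or_ne (ν k) 0 with h0 | h0
  · simp only [h0, Int.cast_zero, abs_zero, mul_zero, zero_div]
    positivity
  · set n := ⌈max 0 (Real.log |(ν k : ℝ)|)⌉₊ with hn
    have hν0 : (0:ℝ) < |(ν k : ℝ)| := by
      have : ν k ≠ 0 := h0
      simpa using abs_pos.mpr (by exact_mod_cast this : ((ν k : ℝ)) ≠ 0)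
    have hνexp : |(ν k : ℝ)| ≤ Real.exp n := by
      rw [← Real.exp_log hν0]
      exact Real.exp_le_exp.mpr (le_trans (le_max_right _ _) (Nat.le_ceil _))
    have ha : ‖z‖ / k ≤ (Real.exp 1)⁻¹ := by
      rw [div_le_iff₀ hk0] at *
      rw [inv_mul_eq_div, le_div_iff₀ (Real.exp_pos 1)]
      linarith [hke]
    have ha0 : 0 ≤ ‖z‖ / k := by positivity
    have hpow : (‖z‖ / k) ^ (mExp ν k) ≤ (Real.exp 1)⁻¹ ^ (k + n) :=
      pow_le_pow_left₀ ha0 ha _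
    have hinv : (Real.exp 1)⁻¹ ^ (k + n) = Real.exp (-(k + n : ℕ)) := by
      rw [← Real.exp_neg, ← Real.exp_nat_mul]
      ring_nf
    calc (‖z‖ / k) ^ (mExp ν k) * |(ν k : ℝ)| / k
        ≤ Real.exp (-(k + n : ℕ)) * Real.exp n / k := by
          rw [← hinv]
          gcongr
      _ = Real.exp (-(k:ℝ)) / k := by
          rw [← Real.exp_add]
          push_cast
          ring_nf
      _ = 1 / (k * Real.exp k) := by
          rw [Real.exp_neg]
          field_simp
end

section
/- Let ν : ℕ → ℤ, m_k = k + ⌈max(0, log|ν(k)|)⌉, K ⊂ ℂ compact, and k₀ ∈ ℕ with k₀ ≥ e·|z| for all z ∈ K. Then for every z ∈ K, ∑_{k=k₀}^∞ |ν(k)| · |Log E_{m_k}(z/k)| ≤ (3/2) ∑_{k=k₀}^∞ e^{−(k+1)}, where Log denotes the principal logarithm (well-defined since |E_{m_k}(z/k) − 1| ≤ e^{−2} < 1). -/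
/-- The Weierstrass factor `E_m(z) = (1 - z) * exp(∑_{j=1}^m z^j / j)`. -/
noncomputable def weierstrassFactor (m : ℕ) (z : ℂ) : ℂ :=
  (1 - z) * Complex.exp (∑ j ∈ Finset.Icc 1 m, z ^ j / j)

/-!
For `‖w‖ < 1` we have `E_m(w) = exp L` with `L = log (1 - w) + ∑_{j ≤ m} w^j / j`, the remainder
of the Taylor series of `log (1 - w)`. Its norm is at most `‖w‖^(m+1) / ((m+1)(1 - ‖w‖))`, hence
at most `‖w‖^(m+1)` when `m ≥ 1` and `‖w‖ ≤ 1/2`; in particular `|Im L| < π`, so `Log E_m(w) = L`.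
For `w = z/k` with `‖w‖ ≤ e⁻¹` and `m_k = k + c`, where `|ν(k)| ≤ e^c`, the `k`-th term is then at
most `e^c · e^{-(k + c + 1)} = e^{-(k+1)}`.
-/

open Complex

lemma Complex.logTaylor_succ_neg (m : ℕ) (w : ℂ) :
    logTaylor (m + 1) (-w) = -∑ j ∈ Finset.Icc 1 m, w ^ j / j := by
  induction m with
  | zero => simp [logTaylor_succ, logTaylor_zero]
  | succ m ih =>
    have hsign : (-1 : ℂ) ^ (m + 1 + 1) * (-w) ^ (m + 1) = -w ^ (m + 1) := by
      rw [neg_pow w, ← mul_assoc, ← pow_add, Odd.neg_one_pow ⟨m + 1, by ring⟩, neg_one_mul]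
    rw [logTaylor_succ, Pi.add_apply, ih, Finset.sum_Icc_succ_top (by omega), mul_div_assoc,
      ← mul_div_assoc, hsign]
    push_cast
    ring

lemma weierstrassFactor_zero_right (m : ℕ) : weierstrassFactor m 0 = 1 := by
  rw [weierstrassFactor, Finset.sum_eq_zero fun j hj ↦ by
    rw [zero_pow (Nat.one_le_iff_ne_zero.1 (Finset.mem_Icc.1 hj).1), zero_div]]
  simp

lemma weierstrassFactor_eq_exp {w : ℂ} (hw : w ≠ 1) (m : ℕ) :
    weierstrassFactor m w = exp (log (1 - w) - logTaylor (m + 1) (-w)) := by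
  rw [logTaylor_succ_neg, sub_neg_eq_add, exp_add, exp_log (sub_ne_zero.2 hw.symm),
    weierstrassFactor]

lemma norm_log_one_sub_sub_logTaylor_le {m : ℕ} {w : ℂ} (hm : 1 ≤ m) (hw : ‖w‖ ≤ 1 / 2) :
    ‖log (1 - w) - logTaylor (m + 1) (-w)‖ ≤ ‖w‖ ^ (m + 1) := by
  have hw' : ‖-w‖ < 1 := by rw [norm_neg]; linarith
  have h := norm_log_sub_logTaylor_le m hw'
  rw [norm_neg, ← sub_eq_add_neg] at h
  refine h.trans ?_
  have hm' : (2 : ℝ) ≤ m + 1 := by exact_mod_cast Nat.succ_le_succ hm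
  have hinv : (1 - ‖w‖)⁻¹ ≤ 2 := by
    rw [inv_le_comm₀ (by linarith) two_pos]; linarith
  rw [mul_div_assoc]
  refine mul_le_of_le_one_right (by positivity) ?_
  rw [div_le_one (by linarith)]
  linarith

lemma log_weierstrassFactor {m : ℕ} {w : ℂ} (hm : 1 ≤ m) (hw : ‖w‖ ≤ 1 / 2) :
    log (weierstrassFactor m w) = log (1 - w) - logTaylor (m + 1) (-w) := by
  have hw1 : w ≠ 1 := by rintro rfl; norm_num at hw
  set L := log (1 - w) - logTaylor (m + 1) (-w)
  have hL : ‖L‖ ≤ 1 := by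
    refine (norm_log_one_sub_sub_logTaylor_le hm hw).trans (pow_le_one₀ (norm_nonneg w) ?_)
    linarith
  have him : |L.im| < Real.pi :=
    (abs_im_le_norm L).trans_lt (hL.trans_lt (by linarith [Real.pi_gt_three]))
  rw [weierstrassFactor_eq_exp hw1, log_exp (by linarith [(abs_lt.1 him).1]) (abs_lt.1 him).2.le]

lemma norm_log_weierstrassFactor_le {m : ℕ} {w : ℂ} (hm : 1 ≤ m) (hw : ‖w‖ ≤ 1 / 2) :
    ‖log (weierstrassFactor m w)‖ ≤ ‖w‖ ^ (m + 1) := by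
  rw [log_weierstrassFactor hm hw]
  exact norm_log_one_sub_sub_logTaylor_le hm hw

lemma abs_le_exp_natCeil_max_zero_log (x : ℝ) : |x| ≤ Real.exp ⌈max 0 (Real.log |x|)⌉₊ := by
  rcases eq_or_ne x 0 with rfl | hx
  · simp
  calc |x| = Real.exp (Real.log |x|) := (Real.exp_log (abs_pos.2 hx)).symm
    _ ≤ _ := Real.exp_le_exp.2 ((le_max_right _ _).trans (Nat.le_ceil _))

lemma abs_mul_norm_log_weierstrassFactor_mExp_le (ν : ℕ → ℤ) {k : ℕ} {z : ℂ}
    (hz : Real.exp 1 * ‖z‖ ≤ k) :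
    |(ν k : ℝ)| * ‖log (weierstrassFactor (mExp ν k) (z / k))‖ ≤ Real.exp (-(k + 1)) := by
  rcases eq_or_ne z 0 with rfl | hz0
  · simpa [weierstrassFactor_zero_right] using (Real.exp_pos _).le
  have hk : (0 : ℝ) < k := lt_of_lt_of_le (by positivity) hz
  have hw : ‖z / k‖ ≤ (Real.exp 1)⁻¹ := by
    rw [norm_div, norm_natCast, div_le_iff₀ hk, ← div_eq_inv_mul, le_div_iff₀' (Real.exp_pos 1)]
    exact hz
  have hw2 : ‖z / k‖ ≤ 1 / 2 := hw.trans (by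
    rw [inv_le_comm₀ (Real.exp_pos 1) (by norm_num)]; linarith [Real.add_one_le_exp (1 : ℝ)])
  have hm : 1 ≤ mExp ν k := le_add_right (by exact_mod_cast hk)
  calc |(ν k : ℝ)| * ‖log (weierstrassFactor (mExp ν k) (z / k))‖
      ≤ Real.exp ⌈max 0 (Real.log |(ν k : ℝ)|)⌉₊ * (Real.exp 1)⁻¹ ^ (mExp ν k + 1) := by
        gcongr
        · exact abs_le_exp_natCeil_max_zero_log _
        · exact (norm_log_weierstrassFactor_le hm hw2).trans (by gcongr)
    _ = Real.exp (-(k + 1)) := by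
        rw [inv_pow, Real.exp_one_pow, ← Real.exp_neg, ← Real.exp_add, mExp]
        push_cast
        ring_nf

theorem tail_log_sum_bound_general (ν : ℕ → ℤ) (K : Set ℂ)
    (k₀ : ℕ) (hk₀K : ∀ z ∈ K, Real.exp 1 * ‖z‖ ≤ k₀)
    (z : ℂ) (hz : z ∈ K) :
    ∑' k : ℕ, |(ν (k₀ + k) : ℝ)| *
        ‖Complex.log (weierstrassFactor (mExp ν (k₀ + k)) (z / (k₀ + k)))‖ ≤
      (3 / 2) * ∑' k : ℕ, Real.exp (-(((k₀ + k : ℕ) : ℝ) + 1)) := by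
  have hterm (k : ℕ) : |(ν (k₀ + k) : ℝ)| *
      ‖Complex.log (weierstrassFactor (mExp ν (k₀ + k)) (z / (k₀ + k)))‖ ≤
        Real.exp (-(((k₀ + k : ℕ) : ℝ) + 1)) := by
    have hzk : Real.exp 1 * ‖z‖ ≤ (k₀ + k : ℕ) :=
      (hk₀K z hz).trans (by exact_mod_cast le_self_add)
    simpa using abs_mul_norm_log_weierstrassFactor_mExp_le ν hzk
  have hsum : Summable fun k : ℕ ↦ Real.exp (-(((k₀ + k : ℕ) : ℝ) + 1)) := by
    have h : Summable fun n : ℕ ↦ Real.exp (-((n : ℝ) + 1)) := by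
      simpa [neg_add, Real.exp_add] using Real.summable_exp_neg_nat.mul_left (Real.exp (-1))
    simpa [add_comm] using (summable_nat_add_iff k₀).2 h
  calc _ ≤ ∑' k : ℕ, Real.exp (-(((k₀ + k : ℕ) : ℝ) + 1)) :=
        (hsum.of_nonneg_of_le (fun _ ↦ by positivity) hterm).tsum_le_tsum hterm hsum
    _ ≤ _ := le_mul_of_one_le_left (tsum_nonneg fun _ ↦ by positivity) (by norm_num)

theorem tail_log_sum_bound (ν : ℕ → ℤ) (K : Set ℂ) (hK : IsCompact K)
    (k₀ : ℕ) (hk₀ : 1 ≤ k₀) (hk₀K : ∀ z ∈ K, Real.exp 1 * ‖z‖ ≤ k₀)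
    (z : ℂ) (hz : z ∈ K) :
    ∑' k : ℕ, |(ν (k₀ + k) : ℝ)| *
        ‖Complex.log (weierstrassFactor (mExp ν (k₀ + k)) (z / (k₀ + k)))‖ ≤
      (3 / 2) * ∑' k : ℕ, Real.exp (-(((k₀ + k : ℕ) : ℝ) + 1)) :=
  tail_log_sum_bound_general ν K k₀ hk₀K z hz
end
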